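/- Let k ≥ 4 and let w be a word over Σ_k satisfying the encodability conditions, with w = u·v where u is the shortest prefix of w containing k−1 distinct letters and |v| = n. If w has period q with q < |w|, then the encoding t(w) (a word of length n over {1,2,3}) also has period q. -/

import Mathlib

/-- The encodability conditions for a word `w` over `Σ_k = Fin k`: `w` contains at
least `k - 1` distinct letters, every factor of length `k - 2` has `k - 2` distinct
letters, and every factor of length `k` contains at least `k - 1` distinct letters. -/
def EncodabilityConditions (k : ℕ) (w : List (Fin k)) : Prop :=
  k - 1 ≤ w.toFinset.card ∧
  (∀ x : List (Fin k), x <:+: w → x.length = k - 2 → x.Nodup) ∧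
  (∀ x : List (Fin k), x <:+: w → x.length = k → k - 1 ≤ x.toFinset.card)

/-- `r` is the ranking permutation of `Σ_k = Fin k` (0-based: the paper's `r[j]` is
`r (j-1)`) determined by the word `p`: the word `r 2, r 3, …, r (k-1)` is the
length-`(k-2)` suffix of `p`, and of the two remaining letters, `r 1` is the one whose
last occurrence in `p` is later (`r 0` possibly not occurring in `p` at all); here a
letter occurring later in `p` has a smaller index in `p.reverse` (a letter not
occurring at all having index `p.length` there). -/
def IsRanking (k : ℕ) (hk : 2 ≤ k) (p : List (Fin k)) (r : Equiv.Perm (Fin k)) : Prop :=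
  (List.ofFn fun j : Fin (k - 2) => r ⟨(j : ℕ) + 2, by have := j.isLt; omega⟩) <:+ p ∧
  p.reverse.idxOf (r ⟨1, by omega⟩) < p.reverse.idxOf (r ⟨0, by omega⟩)

/-- The permutation `σ(j+1)` of the paper (0-based `j : Fin 3`), as a function on
`Fin k`: it fixes the letters `< j` and cyclically shifts the letters in `[j, k)` by
one (for `k ≥ 4`, `(j : ℕ) % k = j`). -/
def sigmaStep (k : ℕ) (j : Fin 3) : Fin k → Fin k := fun x =>
  if (x : ℕ) < (j : ℕ) then x
  else if h : (x : ℕ) + 1 < k then ⟨(x : ℕ) + 1, h⟩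
  else ⟨(j : ℕ) % k, Nat.mod_lt _ x.pos⟩

/-- The morphism `σ : {1,2,3}* → S_k` applied to a word, as a function on `Fin k`
(with `(f * g) x = f (g x)`, i.e. `σ(t₁⋯tₙ) = σ(t₁) ∘ ⋯ ∘ σ(tₙ)`). -/
def sigmaWord (k : ℕ) (ts : List (Fin 3)) : Fin k → Fin k :=
  ts.foldr (fun j acc => sigmaStep k j ∘ acc) id

/-- The word `x` has period `q`: `x_{i+q} = x_i` whenever both positions exist. -/
def HasPeriod {A : Type*} (x : List A) (q : ℕ) : Prop :=
  ∀ (i : ℕ) (h : i + q < x.length), x.get ⟨i + q, h⟩ = x.get ⟨i, by omega⟩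

/-!
The ranking `rᵢ` of the prefix `pᵢ` is determined by any suffix of `pᵢ` with `k - 1` distinct
letters: such a suffix contains `rᵢ[3] ⋯ rᵢ[k]` and `rᵢ[2]`, and the order of the last occurrences
of `rᵢ[1]` and `rᵢ[2]` can be read off it. The last `k` letters of `pᵢ` form such a suffix, and
since `w` has period `q` they are also a suffix of `p_{i+q}`. Hence `rᵢ = r_{i+q}`, and together
with `vᵢ = v_{i+q}` this gives `tᵢ = t_{i+q}`.
-/

namespace List

variable {α : Type*} [DecidableEq α] {s l : List α} {x y : α}

theorem IsSuffix.idxOf_reverse_of_mem (h : s <:+ l) (hx : x ∈ s) :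
    l.reverse.idxOf x = s.reverse.idxOf x := by
  obtain ⟨t, rfl⟩ := h
  rw [reverse_append, idxOf_append_of_mem (mem_reverse.2 hx)]

theorem IsSuffix.idxOf_reverse_lt_length_iff (h : s <:+ l) :
    l.reverse.idxOf x < s.length ↔ x ∈ s := by
  obtain ⟨t, rfl⟩ := h
  rw [reverse_append]
  by_cases hx : x ∈ s
  · rw [idxOf_append_of_mem (mem_reverse.2 hx)]
    simpa [hx] using idxOf_lt_length_iff (l := s.reverse) (a := x)
  · rw [idxOf_append_of_notMem (mt mem_reverse.1 hx)]
    simp [hx]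

theorem IsSuffix.idxOf_reverse_lt_idxOf_reverse_iff (h : s <:+ l) (hy : y ∈ s) :
    l.reverse.idxOf y < l.reverse.idxOf x ↔ s.reverse.idxOf y < s.reverse.idxOf x := by
  rw [h.idxOf_reverse_of_mem hy]
  by_cases hx : x ∈ s
  · rw [h.idxOf_reverse_of_mem hx]
  · have hys := (suffix_refl s).idxOf_reverse_lt_length_iff.2 hy
    have hxl := mt h.idxOf_reverse_lt_length_iff.1 hx
    have hxs := mt (suffix_refl s).idxOf_reverse_lt_length_iff.1 hx
    omega

end List

namespace HasPeriod

variable {α : Type*} {w u v : List α} {q : ℕ}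

theorem of_append_right (h : HasPeriod (u ++ v) q) : HasPeriod v q := by
  intro i hi
  have := h (u.length + i) (by simp; omega)
  simp only [List.get_eq_getElem] at this ⊢
  rw [List.getElem_append_right (by omega), List.getElem_append_right (by omega)] at this
  simpa [Nat.add_assoc] using this

theorem drop_take_suffix_take_add (h : HasPeriod w q) {a : ℕ} (ha : a + q ≤ w.length) (j : ℕ) :
    (w.take a).drop j <:+ w.take (a + q) := by
  rcases le_or_gt j a with hj | hj
  · convert List.drop_suffix (j + q) (w.take (a + q)) using 1
    refine List.ext_getElem (by simp; omega) fun n h₁ h₂ => ?_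
    simp only [List.getElem_drop, List.getElem_take]
    have := h (j + n) (by simp at h₂; omega)
    simpa [Nat.add_right_comm] using this.symm
  · simp [List.drop_eq_nil_of_le (by simp; omega : (w.take a).length ≤ j)]

end HasPeriod

def rankTail {k : ℕ} (r : Equiv.Perm (Fin k)) : List (Fin k) :=
  List.ofFn fun j : Fin (k - 2) => r ⟨(j : ℕ) + 2, by have := j.isLt; omega⟩

section Ranking

variable {k : ℕ} {r r' : Equiv.Perm (Fin k)}

@[simp]
theorem length_rankTail : (rankTail r).length = k - 2 := List.length_ofFn

theorem mem_rankTail_iff (hk : 2 ≤ k) {x : Fin k} :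
    x ∈ rankTail r ↔ x ≠ r ⟨0, by omega⟩ ∧ x ≠ r ⟨1, by omega⟩ := by
  obtain ⟨m, rfl⟩ := r.surjective x
  simp only [rankTail, List.mem_ofFn, r.injective.eq_iff, r.injective.ne_iff, ne_eq,
    Fin.ext_iff]
  constructor
  · rintro ⟨j, hj⟩
    omega
  · intro hm
    exact ⟨⟨m - 2, by omega⟩, by simp; omega⟩

variable {hk : 2 ≤ k} {p p' s : List (Fin k)}

theorem IsRanking.rankTail_suffix (h : IsRanking k hk p r) : rankTail r <:+ p := h.1

-- `s` must contain `r 0` or `r 1`, and the last occurrence of `r 1` is later than that of `r 0`.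
theorem IsRanking.one_mem (h : IsRanking k hk p r) (hs : s <:+ p)
    (hcard : k - 1 ≤ s.toFinset.card) : r ⟨1, by omega⟩ ∈ s := by
  by_cases h0 : r ⟨0, by omega⟩ ∈ s
  · exact hs.idxOf_reverse_lt_length_iff.1 (h.2.trans (hs.idxOf_reverse_lt_length_iff.2 h0))
  by_contra h1
  have hsub : s.toFinset ⊆ (rankTail r).toFinset := by
    intro x hx
    rw [List.mem_toFinset] at hx ⊢
    exact (mem_rankTail_iff hk).2 ⟨fun e => h0 (e ▸ hx), fun e => h1 (e ▸ hx)⟩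
  have := (Finset.card_le_card hsub).trans (List.toFinset_card_le _)
  simp only [length_rankTail] at this
  omega

theorem IsRanking.of_suffix (h : IsRanking k hk p r) (hs : s <:+ p) (hs' : s <:+ p')
    (hcard : k - 1 ≤ s.toFinset.card) : IsRanking k hk p' r := by
  have h1 := h.one_mem hs hcard
  have htail : rankTail r <:+ s := List.suffix_of_suffix_length_le h.rankTail_suffix hs <| by
    have := List.toFinset_card_le s
    simp only [length_rankTail]
    omega
  exact ⟨htail.trans hs', (hs'.idxOf_reverse_lt_idxOf_reverse_iff h1).2
    ((hs.idxOf_reverse_lt_idxOf_reverse_iff h1).1 h.2)⟩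

theorem IsRanking.rankTail_eq (h : IsRanking k hk p r) (h' : IsRanking k hk p r') :
    rankTail r = rankTail r' :=
  (List.suffix_of_suffix_length_le h.rankTail_suffix h'.rankTail_suffix (by simp)).eq_of_length
    (by simp)

theorem IsRanking.one_eq_zero_of_one_ne (h : IsRanking k hk p r) (h' : IsRanking k hk p r')
    (hne : r' ⟨1, by omega⟩ ≠ r ⟨1, by omega⟩) : r' ⟨1, by omega⟩ = r ⟨0, by omega⟩ := by
  have hnot : r' ⟨1, by omega⟩ ∉ rankTail r := by
    rw [h.rankTail_eq h', mem_rankTail_iff hk]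
    simp
  rw [mem_rankTail_iff hk] at hnot
  tauto

theorem IsRanking.unique (h : IsRanking k hk p r) (h' : IsRanking k hk p r') : r = r' := by
  -- Otherwise `r'` swaps `r 0` and `r 1`, and the two order conditions contradict each other.
  have h1 : r ⟨1, by omega⟩ = r' ⟨1, by omega⟩ := by
    by_contra hne
    have hord := h.2
    have hord' := h'.2
    rw [h.one_eq_zero_of_one_ne h' (Ne.symm hne), ← h'.one_eq_zero_of_one_ne h hne] at hord'
    omega
  have h0 : r ⟨0, by omega⟩ = r' ⟨0, by omega⟩ := by
    have hnot : r' ⟨0, by omega⟩ ∉ rankTail r := by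
      rw [h.rankTail_eq h', mem_rankTail_iff hk]
      simp
    rw [mem_rankTail_iff hk, h1] at hnot
    simpa [eq_comm] using hnot
  ext x
  rcases x with ⟨_ | _ | m, hm⟩
  · exact congrArg Fin.val h0
  · exact congrArg Fin.val h1
  · exact congrArg Fin.val (congrFun (List.ofFn_injective (h.rankTail_eq h')) ⟨m, by omega⟩)

end Ranking

-- For `a < k` the truncated `a - k` is `0`: the whole prefix is taken.
theorem EncodabilityConditions.le_card_toFinset_drop_take {k : ℕ} {w : List (Fin k)}
    (hw : EncodabilityConditions k w) {a : ℕ} (ha : a ≤ w.length)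
    (hcard : k - 1 ≤ (w.take a).toFinset.card) :
    k - 1 ≤ ((w.take a).drop (a - k)).toFinset.card := by
  rcases le_or_gt k a with hka | hak
  · refine hw.2.2 _ ((List.drop_suffix _ _).isInfix.trans (List.take_prefix _ _).isInfix) ?_
    simp only [List.length_drop, List.length_take]
    omega
  · rwa [Nat.sub_eq_zero_of_le hak.le, List.drop_zero]

theorem encoding_has_period (k : ℕ) (hk : 4 ≤ k) (u v : List (Fin k))
    (hw : EncodabilityConditions k (u ++ v))
    (hu : u.toFinset.card = k - 1)
    (r : ℕ → Equiv.Perm (Fin k))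
    (hr : ∀ i ≤ v.length, IsRanking k (by omega) (u ++ v.take i) (r i))
    (t : List (Fin 3)) (htl : t.length = v.length)
    (ht : ∀ (i : ℕ) (hi : i < v.length),
      v.get ⟨i, hi⟩ = r i (Fin.castLE (by omega) (t.get ⟨i, by omega⟩)))
    (q : ℕ) (hq : HasPeriod (u ++ v) q) :
    HasPeriod t q := by
  intro i hi
  rw [htl] at hi
  have hp (j : ℕ) : u ++ v.take j = (u ++ v).take (u.length + j) :=
    (List.take_length_add_append j).symm
  have hri := hp i ▸ hr i (by omega)
  have hriq := hp (i + q) ▸ hr (i + q) hi.le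
  have hs := List.drop_suffix (u.length + i - k) ((u ++ v).take (u.length + i))
  have hs' := hq.drop_take_suffix_take_add (a := u.length + i) (by simp; omega) (u.length + i - k)
  rw [Nat.add_assoc] at hs'
  have hcard : k - 1 ≤ ((u ++ v).take (u.length + i)).toFinset.card := by
    rw [← hp, ← hu, List.toFinset_append]
    exact Finset.card_le_card Finset.subset_union_left
  have hreq : r i = r (i + q) :=
    (hri.of_suffix hs hs' (hw.le_card_toFinset_drop_take (by simp; omega) hcard)).unique hriq
  have hv := hq.of_append_right i hi
  rw [ht, ht, ← hreq] at hv
  exact Fin.castLE_injective _ ((r i).injective hv)
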